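/- Let (Ω, F, (F_k)_{k≥0}, P) be a filtered probability space. Let {p_k}, {u_k}, {a_k}, {b_k} be nonnegative integrable random sequences adapted to (F_k) such that ∑_{k=0}^∞ a_k < ∞ almost surely, ∑_{k=0}^∞ b_k < ∞ almost surely, and for all k ≥ 0, E[p_{k+1} | F_k] ≤ (1 + a_k)p_k − u_k + b_k almost surely. Then ∑_{k=0}^∞ u_k < ∞ almost surely and p_k converges almost surely to a nonnegative random variable v. -/

import Mathlib

/-!
Normalising by the predictable products `P k = ∏ j < k, (1 + a j)`, which converge to a finite
positive limit when `∑ a k < ∞`, reduces the theorem to the case `a = 0`. Then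
`Y n = p n + ∑ j < n, (u j - b j)` is a supermartingale. Stopped at the first time the partial
sums of `b` reach a level `c`, it is bounded below by `-c`, hence converges a.s.; on the event
where all partial sums of `b` stay below `c` the stopped process is `Y` itself. Since `Y` then
converges and `p ≥ 0`, the partial sums of `u` are bounded, so `∑ u k < ∞`, and `p n` converges.
-/

open MeasureTheory Filter Finset
open scoped Topology

theorem summable_and_exists_tendsto_of_tendsto_add_sum_sub {q u b : ℕ → ℝ} {l : ℝ}
    (hq : ∀ n, 0 ≤ q n) (hu : ∀ n, 0 ≤ u n) (hb : Summable b)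
    (h : Tendsto (fun n => q n + ∑ j ∈ range n, (u j - b j)) atTop (𝓝 l)) :
    Summable u ∧ ∃ x, Tendsto q atTop (𝓝 x) := by
  obtain ⟨M, hM⟩ := h.bddAbove_range
  obtain ⟨M', hM'⟩ := hb.hasSum.tendsto_sum_nat.bddAbove_range
  have hu_sum : Summable u := summable_of_sum_range_le hu (c := M + M') fun n => by
    have h1 := hM ⟨n, rfl⟩
    have h2 := hM' ⟨n, rfl⟩
    simp only [sum_sub_distrib] at h1 h2
    linarith [hq n]
  refine ⟨hu_sum, l - ∑' j, u j + ∑' j, b j, ?_⟩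
  refine ((h.sub hu_sum.hasSum.tendsto_sum_nat).add hb.hasSum.tendsto_sum_nat).congr fun n => ?_
  rw [sum_sub_distrib]
  ring

theorem summable_and_tendsto_of_inv_mul {P p u : ℕ → ℝ} {L l : ℝ} (hP : ∀ k, 0 < P k)
    (hPL : Tendsto P atTop (𝓝 L)) (hu : ∀ k, 0 ≤ u k)
    (hu_sum : Summable fun k => (P (k + 1))⁻¹ * u k)
    (hp : Tendsto (fun k => (P k)⁻¹ * p k) atTop (𝓝 l)) :
    Summable u ∧ Tendsto p atTop (𝓝 (L * l)) := by
  obtain ⟨M, hM⟩ := hPL.bddAbove_range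
  refine ⟨(hu_sum.mul_left M).of_nonneg_of_le hu fun k => ?_, (hPL.mul hp).congr fun k => ?_⟩
  · calc u k = P (k + 1) * ((P (k + 1))⁻¹ * u k) := by field_simp [(hP (k + 1)).ne']
      _ ≤ M * ((P (k + 1))⁻¹ * u k) :=
          mul_le_mul_of_nonneg_right (hM ⟨k + 1, rfl⟩)
            (mul_nonneg (inv_nonneg.2 (hP (k + 1)).le) (hu k))
  · field_simp [(hP k).ne']

namespace MeasureTheory

variable {Ω : Type*} {m0 : MeasurableSpace Ω} {μ : Measure Ω} {F : Filtration ℕ m0}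

theorem supermartingale_add_sum_sub [IsFiniteMeasure μ] {q u b : ℕ → Ω → ℝ}
    (hq : StronglyAdapted F q) (hu : StronglyAdapted F u) (hb : StronglyAdapted F b)
    (hq_int : ∀ k, Integrable (q k) μ) (hu_int : ∀ k, Integrable (u k) μ)
    (hb_int : ∀ k, Integrable (b k) μ)
    (hrec : ∀ k, ∀ᵐ ω ∂μ, μ[q (k + 1)|F k] ω ≤ q k ω - u k ω + b k ω) :
    Supermartingale (fun n ω => q n ω + ∑ j ∈ range n, (u j ω - b j ω)) F μ := by
  have hD_meas : ∀ n k, n ≤ k + 1 →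
      StronglyMeasurable[F k] fun ω => ∑ j ∈ range n, (u j ω - b j ω) := fun n k hn =>
    Finset.stronglyMeasurable_fun_sum _ fun j hj =>
      ((hu j).sub (hb j)).mono (F.mono (by have := mem_range.1 hj; omega))
  have hD_int : ∀ n, Integrable (fun ω => ∑ j ∈ range n, (u j ω - b j ω)) μ := fun n =>
    integrable_finsetSum _ fun j _ => (hu_int j).sub (hb_int j)
  refine supermartingale_nat (fun n => (hq n).add (hD_meas n n (by omega)))
    (fun n => (hq_int n).add (hD_int n)) fun k => ?_
  have hsplit : μ[fun ω => q (k + 1) ω + ∑ j ∈ range (k + 1), (u j ω - b j ω)|F k]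
      =ᵐ[μ] fun ω => μ[q (k + 1)|F k] ω + ∑ j ∈ range (k + 1), (u j ω - b j ω) := by
    refine (condExp_add (hq_int (k + 1)) (hD_int (k + 1)) (F k)).trans ?_
    rw [condExp_of_stronglyMeasurable (F.le k) (hD_meas (k + 1) k le_rfl) (hD_int (k + 1))]
    rfl
  filter_upwards [hsplit, hrec k] with ω hω hrecω
  rw [hω, sum_range_succ]
  linarith

protected theorem Supermartingale.stoppedProcess [IsFiniteMeasure μ] {f : ℕ → Ω → ℝ}
    (hf : Supermartingale f F μ) {τ : Ω → ℕ∞} (hτ : IsStoppingTime F τ) :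
    Supermartingale (stoppedProcess f τ) F μ := by
  have h : -(stoppedProcess (-f) τ) = stoppedProcess f τ := by ext; simp [stoppedProcess]
  exact h ▸ (hf.neg.stoppedProcess hτ).neg

theorem Supermartingale.exists_ae_tendsto_of_forall_const_le [IsFiniteMeasure μ]
    {f : ℕ → Ω → ℝ} (hf : Supermartingale f F μ) {C : ℝ} (hC : ∀ n ω, C ≤ f n ω) :
    ∀ᵐ ω ∂μ, ∃ l, Tendsto (fun n => f n ω) atTop (𝓝 l) := by
  have hL1 : ∀ n, eLpNorm (-f n) 1 μ ≤ (∫ ω, f 0 ω ∂μ + μ.real Set.univ * (2 * |C|)).toNNReal := by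
    intro n
    have hint := hf.integrable n
    rw [eLpNorm_neg, eLpNorm_one_eq_lintegral_enorm, ← ofReal_integral_norm_eq_lintegral_enorm hint]
    refine ENNReal.ofReal_le_ofReal ?_
    have hmono : ∫ ω, f n ω ∂μ ≤ ∫ ω, f 0 ω ∂μ := by
      simpa using hf.setIntegral_le (Nat.zero_le n) MeasurableSet.univ
    calc ∫ ω, ‖f n ω‖ ∂μ ≤ ∫ ω, (f n ω + 2 * |C|) ∂μ :=
          integral_mono hint.norm (hint.add (integrable_const _)) fun ω => by
            have := hC n ω
            rw [Real.norm_eq_abs, abs_le]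
            constructor <;> cases abs_cases C <;> linarith
      _ ≤ ∫ ω, f 0 ω ∂μ + μ.real Set.univ * (2 * |C|) := by
          rw [integral_add hint (integrable_const _), integral_const, smul_eq_mul]
          linarith
  filter_upwards [hf.neg.exists_ae_tendsto_of_bdd hL1] with ω ⟨l, hl⟩
  exact ⟨-l, by simpa using hl.neg⟩

section leastGE

variable {f g : ℕ → Ω → ℝ} {r : ℝ} {ω : Ω}

theorem lt_of_lt_leastGE {k : ℕ} (hk : (k : ℕ∞) < leastGE f r ω) : f k ω < r := by
  simpa using notMem_of_lt_hittingAfter hk bot_le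

theorem stoppedProcess_leastGE_of_forall_lt (h : ∀ k, f k ω < r) (n : ℕ) :
    stoppedProcess g (leastGE f r) n ω = g n ω := by
  rw [stoppedProcess, leastGE, hittingAfter_eq_top_iff.mpr (by simpa using h)]
  rfl

theorem neg_le_stoppedProcess_leastGE_sum {b : ℕ → Ω → ℝ} (hr : 0 ≤ r)
    (hg : ∀ n ω, -∑ j ∈ range n, b j ω ≤ g n ω) (n : ℕ) (ω : Ω) :
    -r ≤ stoppedProcess g (leastGE (fun k ω => ∑ j ∈ range (k + 1), b j ω) r) n ω := by
  set τ := leastGE (fun k ω => ∑ j ∈ range (k + 1), b j ω) r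
  suffices h : ∀ x : ℕ∞, x ≠ ⊤ → x ≤ τ ω → -r ≤ g x.untopA ω by
    rw [stoppedProcess, ENat.some_eq_natCast]
    exact h _ (ne_top_of_le_ne_top (ENat.natCast_ne_top n) (min_le_left _ _)) (min_le_right _ _)
  intro x hx hxτ
  lift x to ℕ using hx
  change -r ≤ g x ω
  rcases x with _ | k
  · linarith [hg 0 ω, sum_range_zero fun j => b j ω]
  · have hlt : (k : ℕ∞) < τ ω := lt_of_lt_of_le (by norm_cast; omega) hxτ
    linarith [hg (k + 1) ω, lt_of_lt_leastGE hlt]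

end leastGE

theorem robbins_siegmund_additive [IsFiniteMeasure μ] {q u b : ℕ → Ω → ℝ}
    (hq : StronglyAdapted F q) (hu : StronglyAdapted F u) (hb : StronglyAdapted F b)
    (hq_nonneg : ∀ k ω, 0 ≤ q k ω) (hu_nonneg : ∀ k ω, 0 ≤ u k ω)
    (hq_int : ∀ k, Integrable (q k) μ) (hu_int : ∀ k, Integrable (u k) μ)
    (hb_int : ∀ k, Integrable (b k) μ) (hb_sum : ∀ᵐ ω ∂μ, Summable fun k => b k ω)
    (hrec : ∀ k, ∀ᵐ ω ∂μ, μ[q (k + 1)|F k] ω ≤ q k ω - u k ω + b k ω) :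
    ∀ᵐ ω ∂μ, Summable (fun k => u k ω) ∧ ∃ l, Tendsto (fun k => q k ω) atTop (𝓝 l) := by
  set Y : ℕ → Ω → ℝ := fun n ω => q n ω + ∑ j ∈ range n, (u j ω - b j ω)
  set B : ℕ → Ω → ℝ := fun k ω => ∑ j ∈ range (k + 1), b j ω
  have hY := supermartingale_add_sum_sub hq hu hb hq_int hu_int hb_int hrec
  have hB : StronglyAdapted F B := fun k =>
    Finset.stronglyMeasurable_fun_sum _ fun j hj =>
      (hb j).mono (F.mono (by simpa using mem_range.1 hj))
  have hY_ge : ∀ n ω, -∑ j ∈ range n, b j ω ≤ Y n ω := fun n ω => by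
    simp only [Y, sum_sub_distrib]
    linarith [hq_nonneg n ω, sum_nonneg fun j (_ : j ∈ range n) => hu_nonneg j ω]
  have hconv : ∀ᵐ ω ∂μ, ∀ c : ℕ,
      ∃ l, Tendsto (fun n => stoppedProcess Y (leastGE B c) n ω) atTop (𝓝 l) :=
    ae_all_iff.2 fun c =>
      (hY.stoppedProcess (hB.isStoppingTime_leastGE _)).exists_ae_tendsto_of_forall_const_le
        (neg_le_stoppedProcess_leastGE_sum c.cast_nonneg hY_ge)
  filter_upwards [hconv, hb_sum] with ω hω hbω
  obtain ⟨M, hM⟩ := hbω.hasSum.tendsto_sum_nat.bddAbove_range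
  obtain ⟨c, hc⟩ := exists_nat_gt M
  obtain ⟨l, hl⟩ := hω c
  have hB_lt : ∀ k, B k ω < c := fun k => (hM ⟨k + 1, rfl⟩).trans_lt hc
  simp only [stoppedProcess_leastGE_of_forall_lt hB_lt] at hl
  exact summable_and_exists_tendsto_of_tendsto_add_sum_sub (hq_nonneg · ω) (hu_nonneg · ω) hbω hl

theorem Integrable.inv_mul_of_one_le {f g : Ω → ℝ} (hf : Integrable f μ)
    (hg : AEStronglyMeasurable g μ) (hg_one : ∀ ω, 1 ≤ g ω) :
    Integrable (fun ω => (g ω)⁻¹ * f ω) μ :=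
  hf.bdd_mul (c := 1) (hg.aemeasurable.inv.aestronglyMeasurable) (ae_of_all _ fun ω => by
    rw [norm_inv, Real.norm_of_nonneg (zero_le_one.trans (hg_one ω))]
    exact inv_le_one_of_one_le₀ (hg_one ω))

section prodOneAdd

variable {a : ℕ → Ω → ℝ}

def prodOneAdd (a : ℕ → Ω → ℝ) (k : ℕ) (ω : Ω) : ℝ := ∏ j ∈ range k, (1 + a j ω)

theorem prodOneAdd_succ (a : ℕ → Ω → ℝ) (k : ℕ) (ω : Ω) :
    prodOneAdd a (k + 1) ω = prodOneAdd a k ω * (1 + a k ω) :=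
  prod_range_succ _ _

theorem one_le_prodOneAdd {ω : Ω} (ha : ∀ j, 0 ≤ a j ω) (k : ℕ) : 1 ≤ prodOneAdd a k ω :=
  one_le_prod fun j _ => le_add_of_nonneg_right (ha j)

theorem stronglyMeasurable_prodOneAdd (ha : StronglyAdapted F a) {k n : ℕ} (hk : k ≤ n + 1) :
    StronglyMeasurable[F n] (prodOneAdd a k) :=
  Finset.stronglyMeasurable_fun_prod _ fun j hj =>
    stronglyMeasurable_const.add ((ha j).mono (F.mono (by have := mem_range.1 hj; omega)))

theorem exists_tendsto_prodOneAdd {ω : Ω} (ha : Summable fun j => a j ω) :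
    ∃ L, Tendsto (fun k => prodOneAdd a k ω) atTop (𝓝 L) :=
  ⟨_, (Real.multipliable_one_add_of_summable ha).hasProd.tendsto_prod_nat⟩

theorem ae_condExp_inv_prodOneAdd_mul_le [IsFiniteMeasure μ] {p u b : ℕ → Ω → ℝ}
    (ha : StronglyAdapted F a) (ha_nonneg : ∀ k ω, 0 ≤ a k ω)
    (hp_int : ∀ k, Integrable (p k) μ)
    (hrec : ∀ k, ∀ᵐ ω ∂μ, μ[p (k + 1)|F k] ω ≤ (1 + a k ω) * p k ω - u k ω + b k ω) (k : ℕ) :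
    ∀ᵐ ω ∂μ, μ[fun ω => (prodOneAdd a (k + 1) ω)⁻¹ * p (k + 1) ω|F k] ω ≤
      (prodOneAdd a k ω)⁻¹ * p k ω - (prodOneAdd a (k + 1) ω)⁻¹ * u k ω
        + (prodOneAdd a (k + 1) ω)⁻¹ * b k ω := by
  have hP := stronglyMeasurable_prodOneAdd ha (le_refl (k + 1))
  have hP_one : ∀ n ω, 1 ≤ prodOneAdd a n ω := fun n ω => one_le_prodOneAdd (ha_nonneg · ω) n
  have hpull := condExp_mul_of_stronglyMeasurable_left (μ := μ) hP.measurable.inv.stronglyMeasurable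
    ((hp_int (k + 1)).inv_mul_of_one_le (hP.mono (F.le k)).aestronglyMeasurable (hP_one (k + 1)))
    (hp_int (k + 1))
  filter_upwards [hpull, hrec k] with ω hpullω hrecω
  calc μ[fun ω => (prodOneAdd a (k + 1) ω)⁻¹ * p (k + 1) ω|F k] ω
      = (prodOneAdd a (k + 1) ω)⁻¹ * μ[p (k + 1)|F k] ω := hpullω
    _ ≤ (prodOneAdd a (k + 1) ω)⁻¹ * ((1 + a k ω) * p k ω - u k ω + b k ω) :=
        mul_le_mul_of_nonneg_left hrecω (inv_nonneg.2 (zero_le_one.trans (hP_one _ ω)))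
    _ = _ := by
        have hPk : prodOneAdd a k ω ≠ 0 := (zero_lt_one.trans_le (hP_one k ω)).ne'
        have ha1 : 1 + a k ω ≠ 0 := by linarith [ha_nonneg k ω]
        rw [prodOneAdd_succ]
        field_simp

theorem ae_summable_and_exists_tendsto_inv_prodOneAdd_mul [IsFiniteMeasure μ]
    {p u b : ℕ → Ω → ℝ} (hp : StronglyAdapted F p) (hu : StronglyAdapted F u)
    (ha : StronglyAdapted F a) (hb : StronglyAdapted F b)
    (hp_nonneg : ∀ k ω, 0 ≤ p k ω) (hu_nonneg : ∀ k ω, 0 ≤ u k ω) (ha_nonneg : ∀ k ω, 0 ≤ a k ω)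
    (hp_int : ∀ k, Integrable (p k) μ) (hu_int : ∀ k, Integrable (u k) μ)
    (hb_int : ∀ k, Integrable (b k) μ) (hb_sum : ∀ᵐ ω ∂μ, Summable fun k => b k ω)
    (hrec : ∀ k, ∀ᵐ ω ∂μ, μ[p (k + 1)|F k] ω ≤ (1 + a k ω) * p k ω - u k ω + b k ω) :
    ∀ᵐ ω ∂μ, Summable (fun k => (prodOneAdd a (k + 1) ω)⁻¹ * u k ω) ∧
      ∃ l, Tendsto (fun k => (prodOneAdd a k ω)⁻¹ * p k ω) atTop (𝓝 l) := by
  have hP_one : ∀ n ω, 1 ≤ prodOneAdd a n ω := fun n ω => one_le_prodOneAdd (ha_nonneg · ω) n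
  have hP_inv : ∀ {n k}, n ≤ k + 1 → StronglyMeasurable[F k] fun ω => (prodOneAdd a n ω)⁻¹ :=
    fun hn => (stronglyMeasurable_prodOneAdd ha hn).measurable.inv.stronglyMeasurable
  have hP_ae : ∀ n, AEStronglyMeasurable (prodOneAdd a n) μ := fun n =>
    ((stronglyMeasurable_prodOneAdd ha (Nat.le_succ n)).mono (F.le n)).aestronglyMeasurable
  refine robbins_siegmund_additive (q := fun k ω => (prodOneAdd a k ω)⁻¹ * p k ω)
    (u := fun k ω => (prodOneAdd a (k + 1) ω)⁻¹ * u k ω)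
    (b := fun k ω => (prodOneAdd a (k + 1) ω)⁻¹ * b k ω) (fun k => (hP_inv (by omega)).mul (hp k))
    (fun k => (hP_inv le_rfl).mul (hu k)) (fun k => (hP_inv le_rfl).mul (hb k))
    (fun k ω => mul_nonneg (inv_nonneg.2 (zero_le_one.trans (hP_one k ω))) (hp_nonneg k ω))
    (fun k ω => mul_nonneg (inv_nonneg.2 (zero_le_one.trans (hP_one _ ω))) (hu_nonneg k ω))
    (fun k => (hp_int k).inv_mul_of_one_le (hP_ae k) (hP_one k))
    (fun k => (hu_int k).inv_mul_of_one_le (hP_ae _) (hP_one _))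
    (fun k => (hb_int k).inv_mul_of_one_le (hP_ae _) (hP_one _)) ?_
    (ae_condExp_inv_prodOneAdd_mul_le ha ha_nonneg hp_int hrec)
  filter_upwards [hb_sum] with ω hω
  refine hω.abs.of_norm_bounded fun k => ?_
  rw [norm_mul, norm_inv, Real.norm_of_nonneg (zero_le_one.trans (hP_one _ ω)), Real.norm_eq_abs]
  exact mul_le_of_le_one_left (abs_nonneg _) (inv_le_one_of_one_le₀ (hP_one _ ω))

end prodOneAdd

end MeasureTheory

theorem robbins_siegmund_general
    {Ω : Type*} {m0 : MeasurableSpace Ω} (μ : Measure Ω) [IsProbabilityMeasure μ]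
    (F : Filtration ℕ m0)
    (p u a b : ℕ → Ω → ℝ)
    (hp_adapted : Adapted F p) (hu_adapted : Adapted F u)
    (ha_adapted : Adapted F a) (hb_adapted : Adapted F b)
    (hp_nonneg : ∀ k ω, 0 ≤ p k ω) (hu_nonneg : ∀ k ω, 0 ≤ u k ω)
    (ha_nonneg : ∀ k ω, 0 ≤ a k ω)
    (hp_int : ∀ k, Integrable (p k) μ) (hu_int : ∀ k, Integrable (u k) μ)
    (hb_int : ∀ k, Integrable (b k) μ)
    (ha_sum : ∀ᵐ ω ∂μ, Summable fun k => a k ω)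
    (hb_sum : ∀ᵐ ω ∂μ, Summable fun k => b k ω)
    (hrec : ∀ k : ℕ, ∀ᵐ ω ∂μ,
      (μ[p (k + 1)|F k]) ω ≤ (1 + a k ω) * p k ω - u k ω + b k ω) :
    (∀ᵐ ω ∂μ, Summable fun k => u k ω) ∧
      ∃ v : Ω → ℝ, ∀ᵐ ω ∂μ, 0 ≤ v ω ∧
        Tendsto (fun k => p k ω) atTop (nhds (v ω)) := by
  have key : ∀ᵐ ω ∂μ, Summable (fun k => u k ω) ∧ ∃ x, Tendsto (fun k => p k ω) atTop (𝓝 x) := by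
    filter_upwards [ae_summable_and_exists_tendsto_inv_prodOneAdd_mul hp_adapted.stronglyAdapted
      hu_adapted.stronglyAdapted ha_adapted.stronglyAdapted hb_adapted.stronglyAdapted hp_nonneg
      hu_nonneg ha_nonneg hp_int hu_int hb_int hb_sum hrec, ha_sum] with ω ⟨hu_sum, l, hl⟩ haω
    obtain ⟨L, hL⟩ := exists_tendsto_prodOneAdd haω
    have hP_pos : ∀ k, 0 < prodOneAdd a k ω := fun k =>
      zero_lt_one.trans_le (one_le_prodOneAdd (ha_nonneg · ω) k)
    obtain ⟨hu_sum', hp_lim⟩ := summable_and_tendsto_of_inv_mul hP_pos hL (hu_nonneg · ω) hu_sum hl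
    exact ⟨hu_sum', _, hp_lim⟩
  refine ⟨key.mono fun _ h => h.1, fun ω => limUnder atTop (fun k => p k ω), key.mono fun ω h => ?_⟩
  obtain ⟨x, hx⟩ := h.2
  dsimp only
  rw [hx.limUnder_eq]
  exact ⟨ge_of_tendsto' hx (hp_nonneg · ω), hx⟩

/-- Robbins–Siegmund-type lemma. If nonnegative adapted integrable
sequences `p, u, a, b` satisfy `∑ a_k < ∞` a.s., `∑ b_k < ∞` a.s., and
`E[p_{k+1} | F_k] ≤ (1 + a_k) p_k - u_k + b_k` a.s. for all `k`, then almost surely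
`∑ u_k < ∞` and `p_k` converges to a nonnegative random variable `v`. -/
theorem robbins_siegmund
    {Ω : Type*} {m0 : MeasurableSpace Ω} (μ : Measure Ω) [IsProbabilityMeasure μ]
    (F : Filtration ℕ m0)
    (p u a b : ℕ → Ω → ℝ)
    (hp_adapted : Adapted F p) (hu_adapted : Adapted F u)
    (ha_adapted : Adapted F a) (hb_adapted : Adapted F b)
    (hp_nonneg : ∀ k ω, 0 ≤ p k ω) (hu_nonneg : ∀ k ω, 0 ≤ u k ω)
    (ha_nonneg : ∀ k ω, 0 ≤ a k ω) (hb_nonneg : ∀ k ω, 0 ≤ b k ω)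
    (hp_int : ∀ k, Integrable (p k) μ) (hu_int : ∀ k, Integrable (u k) μ)
    (ha_int : ∀ k, Integrable (a k) μ) (hb_int : ∀ k, Integrable (b k) μ)
    (ha_sum : ∀ᵐ ω ∂μ, Summable fun k => a k ω)
    (hb_sum : ∀ᵐ ω ∂μ, Summable fun k => b k ω)
    (hrec : ∀ k : ℕ, ∀ᵐ ω ∂μ,
      (μ[p (k + 1)|F k]) ω ≤ (1 + a k ω) * p k ω - u k ω + b k ω) :
    (∀ᵐ ω ∂μ, Summable fun k => u k ω) ∧
      ∃ v : Ω → ℝ, ∀ᵐ ω ∂μ, 0 ≤ v ω ∧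
        Tendsto (fun k => p k ω) atTop (nhds (v ω)) :=
  robbins_siegmund_general μ F p u a b hp_adapted hu_adapted ha_adapted hb_adapted hp_nonneg
    hu_nonneg ha_nonneg hp_int hu_int hb_int ha_sum hb_sum hrec
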